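/- arXiv:2403.16381 — 2 statements merged into one kernel-verified Lean document; each statement's English description precedes it below -/
import Mathlib

section
/- Any cluster matrix T = Σ_μ t_μ X_μ, built as a linear combination of excitation matrices whose occupied indices lie in {1,...,N}, satisfies T^{N+1} = 0. Consequently exp(T) = Σ_{k=0}^{N} T^k/k! is a finite (polynomial) sum. -/
/-!
Write each excitation as `X_μ = C_μ A_μ`, with `C_μ` a product of virtual creators and `A_μ` a
nonempty product of occupied annihilators. Occupied annihilators anticommute with virtual
creators, so right multiplication by `T` maps the left ideal generated by words of at least `j`
occupied annihilators into the one for `j + 1`; hence `T ^ j` lies in the `j`-th of these ideals.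
A word of more than `N` occupied annihilators repeats a letter and vanishes, because annihilators
anticommute and square to zero. So `T ^ (N + 1) = 0` and the exponential series terminates.
-/

section

variable {R : Type*} [Ring R]

theorem mul_list_prod_eq_of_anticommute {x : R} {ys : List R}
    (h : ∀ y ∈ ys, x * y = -(y * x)) : x * ys.prod = (-1) ^ ys.length * (ys.prod * x) := by
  induction ys with
  | nil => simp
  | cons y ys ih =>
    rw [List.forall_mem_cons] at h
    rw [List.prod_cons, ← mul_assoc, h.1, neg_mul, mul_assoc, ih h.2, List.length_cons,
      pow_succ, ← mul_assoc y, ← ((Commute.neg_one_left y).pow_left _).eq]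
    noncomm_ring

theorem list_prod_mul_list_prod_eq_of_anticommute {xs ys : List R}
    (h : ∀ x ∈ xs, ∀ y ∈ ys, x * y = -(y * x)) :
    xs.prod * ys.prod = (-1) ^ (xs.length * ys.length) * (ys.prod * xs.prod) := by
  induction xs with
  | nil => simp
  | cons x xs ih =>
    rw [List.forall_mem_cons] at h
    rw [List.prod_cons, mul_assoc, ih h.2, ← mul_assoc, ← ((Commute.neg_one_left x).pow_left _).eq,
      mul_assoc, ← mul_assoc x, mul_list_prod_eq_of_anticommute h.1, List.length_cons, add_mul,
      one_mul, pow_add]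
    simp only [mul_assoc]

end

theorem List.Nodup.length_le_card_of_forall_mem {ι : Type*} {s : Finset ι} {L : List ι}
    (hL : L.Nodup) (hs : ∀ i ∈ L, i ∈ s) : L.length ≤ s.card := by
  classical
  simpa [List.toFinset_card_of_nodup hL] using
    Finset.card_le_card fun i hi => hs i (List.mem_toFinset.mp hi)

namespace Anticommuting

variable {R ι : Type*} [Ring R] {a : ι → R}

theorem list_prod_map_eq_zero_of_not_nodup (hsq : ∀ i, a i * a i = 0)
    (hanti : ∀ i j, a i * a j + a j * a i = 0) {L : List ι} (hL : ¬L.Nodup) :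
    (L.map a).prod = 0 := by
  induction L with
  | nil => exact absurd List.nodup_nil hL
  | cons i L ih =>
    rw [List.nodup_cons, not_and_or, not_not] at hL
    rcases hL with hi | hL
    · obtain ⟨l₁, l₂, rfl⟩ := List.append_of_mem hi
      have hpass : a i * (l₁.map a).prod = (-1) ^ l₁.length * ((l₁.map a).prod * a i) := by
        simpa using mul_list_prod_eq_of_anticommute (x := a i) (ys := l₁.map a)
          (by simpa using fun j _ => eq_neg_of_add_eq_zero_left (hanti i j))
      simp only [List.map_cons, List.map_append, List.prod_cons, List.prod_append, ← mul_assoc,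
        hpass]
      simp only [mul_assoc, hsq, zero_mul, mul_zero]
    · rw [List.map_cons, List.prod_cons, ih hL, mul_zero]

variable (a) in
-- For noncommutative `R`, `Ideal R` consists of left ideals.
def wordIdeal (s : Finset ι) (j : ℕ) : Ideal R :=
  Ideal.span {w | ∃ L : List ι, (∀ i ∈ L, i ∈ s) ∧ j ≤ L.length ∧ (L.map a).prod = w}

variable {s : Finset ι}

theorem wordIdeal_antitone : Antitone (wordIdeal a s) := fun _ _ hjk =>
  Ideal.span_mono fun _ ⟨L, hL, hlen, hw⟩ => ⟨L, hL, hjk.trans hlen, hw⟩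

theorem one_mem_wordIdeal_zero : (1 : R) ∈ wordIdeal a s 0 :=
  Ideal.subset_span ⟨[], by simp, le_rfl, rfl⟩

theorem wordIdeal_eq_bot (hsq : ∀ i, a i * a i = 0) (hanti : ∀ i j, a i * a j + a j * a i = 0)
    {j : ℕ} (hj : s.card < j) : wordIdeal a s j = ⊥ := by
  refine Ideal.span_eq_bot.mpr ?_
  rintro _ ⟨L, hL, hlen, rfl⟩
  exact list_prod_map_eq_zero_of_not_nodup hsq hanti fun hnd =>
    (hnd.length_le_card_of_forall_mem hL).not_gt (hj.trans_le hlen)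

theorem mul_mem_wordIdeal_add {x : R} {j : ℕ} (hx : x ∈ wordIdeal a s j) {cs : List R}
    (hcs : ∀ i ∈ s, ∀ c ∈ cs, a i * c = -(c * a i)) {L : List ι} (hL : ∀ i ∈ L, i ∈ s) :
    x * (cs.prod * (L.map a).prod) ∈ wordIdeal a s (j + L.length) := by
  induction hx using Submodule.span_induction with
  | mem w hw =>
    obtain ⟨M, hM, hlen, rfl⟩ := hw
    have hpass := list_prod_mul_list_prod_eq_of_anticommute (xs := M.map a) (ys := cs)
      (by simpa using fun i hi => hcs i (hM i hi))
    rw [← mul_assoc, hpass, mul_assoc, mul_assoc, ← mul_assoc]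
    refine Ideal.mul_mem_left _ _ (Ideal.subset_span ⟨M ++ L, ?_, ?_, by simp⟩)
    · simpa [or_imp, forall_and] using ⟨hM, hL⟩
    · simpa using hlen
  | zero => simp
  | add x y _ _ hx hy => rw [add_mul]; exact add_mem hx hy
  | smul c x _ hx => rw [smul_eq_mul, mul_assoc]; exact Ideal.mul_mem_left _ c hx

variable {k κ : Type*} [CommSemiring k] [Algebra k R] [Fintype κ]

theorem mul_sum_mem_wordIdeal_succ {x : R} {j : ℕ} (hx : x ∈ wordIdeal a s j) (t : κ → k)
    {cs : κ → List R} (hcs : ∀ μ, ∀ i ∈ s, ∀ c ∈ cs μ, a i * c = -(c * a i))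
    {Ls : κ → List ι} (hLs : ∀ μ, ∀ i ∈ Ls μ, i ∈ s) (hne : ∀ μ, Ls μ ≠ []) :
    x * ∑ μ, t μ • ((cs μ).prod * ((Ls μ).map a).prod) ∈ wordIdeal a s (j + 1) := by
  rw [Finset.mul_sum]
  refine Ideal.sum_mem _ fun μ _ => ?_
  rw [mul_smul_comm]
  have hlen : j + 1 ≤ j + (Ls μ).length :=
    Nat.add_le_add_left (List.length_pos_iff.mpr (hne μ)) j
  exact Submodule.smul_of_tower_mem _ _
    (wordIdeal_antitone hlen (mul_mem_wordIdeal_add hx (hcs μ) (hLs μ)))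

theorem sum_pow_mem_wordIdeal (t : κ → k)
    {cs : κ → List R} (hcs : ∀ μ, ∀ i ∈ s, ∀ c ∈ cs μ, a i * c = -(c * a i))
    {Ls : κ → List ι} (hLs : ∀ μ, ∀ i ∈ Ls μ, i ∈ s) (hne : ∀ μ, Ls μ ≠ []) (j : ℕ) :
    (∑ μ, t μ • ((cs μ).prod * ((Ls μ).map a).prod)) ^ j ∈ wordIdeal a s j := by
  induction j with
  | zero => rw [pow_zero]; exact one_mem_wordIdeal_zero
  | succ j ih => rw [pow_succ]; exact mul_sum_mem_wordIdeal_succ ih t hcs hLs hne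

theorem sum_pow_card_succ_eq_zero (hsq : ∀ i, a i * a i = 0)
    (hanti : ∀ i j, a i * a j + a j * a i = 0) (t : κ → k)
    {cs : κ → List R} (hcs : ∀ μ, ∀ i ∈ s, ∀ c ∈ cs μ, a i * c = -(c * a i))
    {Ls : κ → List ι} (hLs : ∀ μ, ∀ i ∈ Ls μ, i ∈ s) (hne : ∀ μ, Ls μ ≠ []) :
    (∑ μ, t μ • ((cs μ).prod * ((Ls μ).map a).prod)) ^ (s.card + 1) = 0 := by
  simpa [wordIdeal_eq_bot hsq hanti (Nat.lt_succ_self _)] using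
    sum_pow_mem_wordIdeal t hcs hLs hne (s.card + 1)

end Anticommuting

theorem NormedSpace.exp_eq_sum_range_of_pow_eq_zero {𝕂 𝔸 : Type*} [Field 𝕂] [CharZero 𝕂]
    [Ring 𝔸] [Algebra 𝕂 𝔸] [TopologicalSpace 𝔸] [IsTopologicalRing 𝔸] {x : 𝔸} {m : ℕ}
    (hx : x ^ m = 0) :
    NormedSpace.exp x = ∑ k ∈ Finset.range m, ((k.factorial : 𝕂)⁻¹) • x ^ k := by
  rw [NormedSpace.exp_eq_tsum 𝕂]
  refine tsum_eq_sum fun k hk => ?_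
  rw [pow_eq_zero_of_le (not_lt.mp (Finset.mem_range.not.mp hk)) hx, smul_zero]

open Matrix

theorem stmt_5_general (n K N m : ℕ)
    (an : Fin K → Matrix (Fin n) (Fin n) ℂ)
    -- canonical anticommutation relations
    (hAA : ∀ P Q, an P * an Q + an Q * an P = 0)
    (hCA : ∀ P Q, (an P)ᴴ * an Q + an Q * (an P)ᴴ = if P = Q then 1 else 0)
    -- a family of excitation matrices X_μ, given by lists of indices
    (As Is : Fin m → List (Fin K)) (t : Fin m → ℂ)
    (hlen : ∀ μ, (As μ).length = (Is μ).length)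
    (hne : ∀ μ, As μ ≠ [])
    (hAvirt : ∀ μ, ∀ A ∈ As μ, N ≤ A.val)
    (hIocc : ∀ μ, ∀ I ∈ Is μ, I.val < N)
    -- the cluster matrix T = Σ_μ t_μ X_μ
    (T : Matrix (Fin n) (Fin n) ℂ)
    (hT : T = ∑ μ : Fin m,
      t μ • (((As μ).map fun P => (an P)ᴴ).prod * ((Is μ).map an).prod)) :
    T ^ (N + 1) = 0 ∧
    NormedSpace.exp T = ∑ k ∈ Finset.range (N + 1), ((k.factorial : ℂ)⁻¹) • T ^ k := by
  let occ : Finset (Fin K) := {I | I.val < N}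
  have hsq : ∀ P, an P * an P = 0 := fun P => by
    simpa [← two_smul ℂ] using hAA P P
  have hpass : ∀ μ, ∀ I ∈ occ, ∀ c ∈ (As μ).map (fun P => (an P)ᴴ), an I * c = -(c * an I) := by
    intro μ I hI c hc
    obtain ⟨P, hP, rfl⟩ := List.mem_map.mp hc
    have hPI : P ≠ I := fun h => (hAvirt μ P hP).not_gt (h ▸ (Finset.mem_filter.mp hI).2)
    exact eq_neg_of_add_eq_zero_left (by simpa [hPI, add_comm] using hCA P I)
  have hIne : ∀ μ, Is μ ≠ [] := fun μ => by
    simpa [← List.length_pos_iff, ← hlen μ] using hne μ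
  have hcard : occ.card ≤ N := by
    simp [occ, Fin.card_filter_val_lt]
  have hTN : T ^ (N + 1) = 0 := by
    rw [hT]
    have hIs : ∀ μ, ∀ I ∈ Is μ, I ∈ occ := fun μ I hI =>
      Finset.mem_filter.mpr ⟨Finset.mem_univ I, hIocc μ I hI⟩
    exact pow_eq_zero_of_le (by omega)
      (Anticommuting.sum_pow_card_succ_eq_zero hsq hAA t hpass hIs hIne)
  exact ⟨hTN, NormedSpace.exp_eq_sum_range_of_pow_eq_zero hTN⟩

theorem stmt_5 (n K N m : ℕ) (hNK : N < K)
    (an : Fin K → Matrix (Fin n) (Fin n) ℂ)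
    -- canonical anticommutation relations
    (hAA : ∀ P Q, an P * an Q + an Q * an P = 0)
    (hCC : ∀ P Q, (an P)ᴴ * (an Q)ᴴ + (an Q)ᴴ * (an P)ᴴ = 0)
    (hCA : ∀ P Q, (an P)ᴴ * an Q + an Q * (an P)ᴴ = if P = Q then 1 else 0)
    -- a family of excitation matrices X_μ, given by lists of indices
    (As Is : Fin m → List (Fin K)) (t : Fin m → ℂ)
    (hlen : ∀ μ, (As μ).length = (Is μ).length)
    (hne : ∀ μ, As μ ≠ []) (hk : ∀ μ, (As μ).length ≤ N)
    (hAnd : ∀ μ, (As μ).Nodup) (hInd : ∀ μ, (Is μ).Nodup)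
    (hAvirt : ∀ μ, ∀ A ∈ As μ, N ≤ A.val)
    (hIocc : ∀ μ, ∀ I ∈ Is μ, I.val < N)
    -- the cluster matrix T = Σ_μ t_μ X_μ
    (T : Matrix (Fin n) (Fin n) ℂ)
    (hT : T = ∑ μ : Fin m,
      t μ • (((As μ).map fun P => (an P)ᴴ).prod * ((Is μ).map an).prod)) :
    T ^ (N + 1) = 0 ∧
    NormedSpace.exp T = ∑ k ∈ Finset.range (N + 1), ((k.factorial : ℂ)⁻¹) • T ^ k :=
  stmt_5_general n K N m an hAA hCA As Is t hlen hne hAvirt hIocc T hT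
end

section
/- If |w⟩ ∈ ℂ^{2^K} satisfies ⟨φ₀|w⟩ = 1 (with |φ₀⟩ the reference determinant) and |w⟩ lies in the N-particle sector, then there exists a unique cluster amplitude vector t such that |w⟩ = e^{T(t)}|φ₀⟩, where T(t) = Σ_μ t_μ X_μ ranges over all excitation matrices of order k ≤ N. -/
open Matrix

/-- The 2×2 annihilation matrix `a = [[0,1],[0,0]]`. -/
noncomputable def amat : Matrix (Fin 2) (Fin 2) ℂ := !![0, 1; 0, 0]

/-- The Pauli matrix `σ_z = [[1,0],[0,-1]]`. -/
noncomputable def sigmaZ : Matrix (Fin 2) (Fin 2) ℂ := !![1, 0; 0, -1]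

/-- The fermionic annihilation matrix
`a_P = σ_z ⊗ ⋯ ⊗ σ_z ⊗ a ⊗ I ⊗ ⋯ ⊗ I` on `(ℂ²)^{⊗K}`, written entrywise. -/
noncomputable def ann (K : ℕ) (P : Fin K) :
    Matrix (Fin K → Fin 2) (Fin K → Fin 2) ℂ := fun s t =>
  ∏ Q : Fin K,
    if Q < P then sigmaZ (s Q) (t Q)
    else if Q = P then amat (s Q) (t Q)
    else (1 : Matrix (Fin 2) (Fin 2) ℂ) (s Q) (t Q)

/-- The excitation matrix `X_μ = a_{A_k}† ⋯ a_{A_1}† a_{I_k} ⋯ a_{I_1}`. -/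
noncomputable def exc (K : ℕ) (As Is : List (Fin K)) :
    Matrix (Fin K → Fin 2) (Fin K → Fin 2) ℂ :=
  (As.map fun P => (ann K P)ᴴ).prod * (Is.map (ann K)).prod

/-- The reference determinant `|φ₀⟩ = a_N† ⋯ a_1† |0,…,0⟩`: the basis vector
whose first `N` occupation numbers are `1` and the rest are `0`. -/
noncomputable def refState (K N : ℕ) : (Fin K → Fin 2) → ℂ := fun s =>
  if (fun i : Fin K => if i.val < N then (1 : Fin 2) else 0) = s then 1 else 0

/-- Multi-indices μ of excitation matrices of order `1 ≤ k ≤ N`: a set of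
virtual indices and a set of occupied indices of equal cardinality `k`. -/
def ExIdx (K N : ℕ) : Type :=
  {p : Finset (Fin K) × Finset (Fin K) //
    (∀ A ∈ p.1, N ≤ A.val) ∧ (∀ I ∈ p.2, I.val < N) ∧
      p.1.card = p.2.card ∧ 1 ≤ p.1.card ∧ p.1.card ≤ N}

noncomputable instance (K N : ℕ) : Fintype (ExIdx K N) := by
  unfold ExIdx; infer_instance

/-- The excitation matrix `X_μ` associated with a multi-index μ. -/
noncomputable def excIdx {K N : ℕ} (μ : ExIdx K N) :
    Matrix (Fin K → Fin 2) (Fin K → Fin 2) ℂ :=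
  exc K (μ.1.1.sort (· ≤ ·)) (μ.1.2.sort (· ≤ ·))

/-!
An excitation `X_μ` sends an occupation-number basis state `|S⟩` either to `0` or to `±|S'⟩`,
where `S'` has the same number of particles and `rank μ ≥ 1` more occupied virtual orbitals
than `S`. Hence `T(t)` is nilpotent, `e^{T(t)}|φ₀⟩` is a finite sum lying in the `N`-particle
sector with `⟨φ₀|e^{T(t)}|φ₀⟩ = 1`, and the other determinants of that sector are exactly the
`X_μ|φ₀⟩ = ±|S_μ⟩`. Since `(T^n - T'^n)|φ₀⟩` only lives at excitation level `≥ k + n - 1` when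
`t` and `t'` agree below rank `k`, the coefficient of `e^{T(t)}|φ₀⟩` at `S_μ` is `±t_μ` plus a
function of the amplitudes of lower rank. The map from amplitudes to these coefficients is thus
unitriangular with respect to the rank, hence bijective.
-/

theorem Function.bijective_of_triangular {ι 𝕜 : Type*} [Finite ι] [Field 𝕜] (r : ι → ℕ)
    (ε : ι → 𝕜) (hε : ∀ i, ε i ≠ 0) (Φ : (ι → 𝕜) → ι → 𝕜)
    -- `Φ t i` is `ε i * t i` plus a function of the `t j` with `r j < r i`
    (hΦ : ∀ t t' i, (∀ j, r j < r i → t j = t' j) → Φ t i - Φ t' i = (t i - t' i) * ε i) :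
    Function.Bijective Φ := by
  obtain ⟨B, hB⟩ := (Set.finite_range r).bddAbove
  have hr : ∀ i, r i < B + 1 := fun i => Nat.lt_succ_of_le (hB ⟨i, rfl⟩)
  constructor
  · intro t t' h
    suffices key : ∀ k i, r i < k → t i = t' i from funext fun i => key _ i (hr i)
    intro k
    induction k with
    | zero => simp
    | succ k ih =>
      intro i hi
      have := hΦ t t' i fun j hj => ih j (by omega)
      rw [h, sub_self, eq_comm, mul_eq_zero, sub_eq_zero] at this
      exact this.resolve_right (hε i)
  · intro w
    suffices key : ∀ k, ∃ t, ∀ i, r i < k → Φ t i = w i by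
      obtain ⟨t, ht⟩ := key (B + 1)
      exact ⟨t, funext fun i => ht i (hr i)⟩
    intro k
    induction k with
    | zero => simp
    | succ k ih =>
      obtain ⟨t, ht⟩ := ih
      let t' i := if r i = k then t i + (w i - Φ t i) / ε i else t i
      refine ⟨t', fun i hi => ?_⟩
      have := hΦ t' t i fun j hj => if_neg (by omega)
      by_cases hik : r i = k
      · simp only [t', hik, if_true, add_sub_cancel_left, div_mul_cancel₀ _ (hε i)] at this
        rw [← sub_add_cancel (Φ t' i) (Φ t i), this]
        ring
      · simp only [t', hik, if_false, sub_self, zero_mul, sub_eq_zero] at this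
        rw [this, ht i (by omega)]

theorem Matrix.exists_ne_zero_of_mulVec_apply_ne_zero {ι R : Type*} [Fintype ι]
    [NonUnitalNonAssocSemiring R] {M : Matrix ι ι R} {v : ι → R} {s : ι} (h : (M *ᵥ v) s ≠ 0) :
    ∃ u, M s u ≠ 0 ∧ v u ≠ 0 := by
  obtain ⟨u, -, hu⟩ := Finset.exists_ne_zero_of_sum_ne_zero h
  exact ⟨u, ne_zero_and_ne_zero_of_mul hu⟩

namespace CoupledCluster

variable {K : ℕ}

def occ : Finset (Fin K) ≃ (Fin K → Fin 2) where
  toFun S i := if i ∈ S then 1 else 0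
  invFun s := Finset.univ.filter fun i => s i = 1
  left_inv S := by ext i; by_cases h : i ∈ S <;> simp [h]
  right_inv s := by funext i; rcases Fin.exists_fin_two.mp ⟨s i, rfl⟩ with h | h <;> simp [h]

lemma occ_apply (S : Finset (Fin K)) (i : Fin K) : occ S i = if i ∈ S then 1 else 0 := rfl

noncomputable def basisVec (S : Finset (Fin K)) : (Fin K → Fin 2) → ℂ := Pi.single (occ S) 1

lemma basisVec_apply_occ (S T : Finset (Fin K)) :
    basisVec S (occ T) = if T = S then 1 else 0 := by
  simp [basisVec, Pi.single_apply]

lemma mulVec_basisVec (M : Matrix (Fin K → Fin 2) (Fin K → Fin 2) ℂ) (S : Finset (Fin K)) :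
    M *ᵥ basisVec S = fun s => M s (occ S) := by
  rw [basisVec, mulVec_single_one]; rfl

-- `(-1) ^ jwCount S P` is the sign produced by the string of `σ_z`s in `a_P` acting on `|S⟩`.
def jwCount (S : Finset (Fin K)) (P : Fin K) : ℕ := (S.filter (· < P)).card

lemma ann_apply_occ (P : Fin K) (s : Fin K → Fin 2) (S : Finset (Fin K)) :
    ann K P s (occ S) =
      if P ∈ S ∧ s = occ (S.erase P) then (-1) ^ jwCount S P else 0 := by
  split_ifs with h
  · obtain ⟨hP, rfl⟩ := h
    rw [jwCount, ← Finset.prod_const, ← Finset.univ_inter (S.filter _), ← Finset.prod_ite_mem]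
    refine Finset.prod_congr rfl fun Q _ => ?_
    rcases lt_trichotomy Q P with hQP | rfl | hQP
    · by_cases hQS : Q ∈ S <;> simp [hQP, hQP.ne, hQS, occ_apply, sigmaZ]
    · simp [hP, occ_apply, amat]
    · simp [hQP.ne', hQP.not_gt, occ_apply, Matrix.one_apply]
  · obtain ⟨Q, hQ⟩ : ∃ Q, ¬ (Q = P → P ∈ S) ∨ s Q ≠ occ (S.erase P) Q := by
      by_contra! hc
      exact h ⟨(hc P).1 rfl, funext fun Q => (hc Q).2⟩
    refine Finset.prod_eq_zero (Finset.mem_univ Q) ?_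
    have hs : s Q = 0 ∨ s Q = 1 := by omega
    rcases lt_trichotomy Q P with hQP | rfl | hQP
    · by_cases hQS : Q ∈ S <;> rcases hs with hs | hs <;> simp_all [hQP.ne, occ_apply, sigmaZ]
    · by_cases hQS : Q ∈ S <;> rcases hs with hs | hs <;> simp_all [occ_apply, amat]
    · by_cases hQS : Q ∈ S <;> rcases hs with hs | hs <;> simp_all [hQP.ne', hQP.not_gt, occ_apply]

lemma ann_mulVec_basisVec (P : Fin K) (S : Finset (Fin K)) :
    ann K P *ᵥ basisVec S =
      if P ∈ S then (-1 : ℂ) ^ jwCount S P • basisVec (S.erase P) else 0 := by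
  rw [mulVec_basisVec]
  funext s
  rw [ann_apply_occ]
  by_cases hP : P ∈ S <;> simp [hP, basisVec, Pi.single_apply]

lemma cre_mulVec_basisVec (P : Fin K) (S : Finset (Fin K)) :
    (ann K P)ᴴ *ᵥ basisVec S =
      if P ∉ S then (-1 : ℂ) ^ jwCount S P • basisVec (insert P S) else 0 := by
  rw [mulVec_basisVec]
  funext s
  obtain ⟨T, rfl⟩ := occ.surjective s
  have hcond : P ∈ T ∧ occ S = occ (T.erase P) ↔ P ∉ S ∧ T = insert P S := by
    rw [occ.apply_eq_iff_eq]
    constructor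
    · rintro ⟨hP, rfl⟩
      simp [Finset.insert_erase hP]
    · rintro ⟨hP, rfl⟩
      simp [Finset.erase_insert hP]
  have hjw : jwCount (insert P S) P = jwCount S P := by
    simp [jwCount, Finset.filter_insert]
  rw [conjTranspose_apply, ann_apply_occ]
  simp only [hcond]
  by_cases hP : P ∈ S <;> by_cases hT : T = insert P S <;> simp [hP, hT, basisVec_apply_occ, hjw]

lemma annString_mulVec_basisVec {L : List (Fin K)} (hL : L.Nodup) (S : Finset (Fin K)) :
    ∃ n : ℕ, (L.map (ann K)).prod *ᵥ basisVec S =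
      if L.toFinset ⊆ S then (-1 : ℂ) ^ n • basisVec (S \ L.toFinset) else 0 := by
  induction L with
  | nil => exact ⟨0, by simp⟩
  | cons a L ih =>
    obtain ⟨haL, hL⟩ := List.nodup_cons.1 hL
    obtain ⟨n, hn⟩ := ih hL
    rw [List.map_cons, List.prod_cons, ← mulVec_mulVec, hn]
    by_cases hLS : L.toFinset ⊆ S
    · refine ⟨n + jwCount (S \ L.toFinset) a, ?_⟩
      have ha : a ∈ S \ L.toFinset ↔ a ∈ S := by simp [haL]
      rw [if_pos hLS, mulVec_smul, ann_mulVec_basisVec]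
      by_cases haS : a ∈ S
      · simp [ha.2 haS, haS, hLS, Finset.insert_subset_iff, Finset.sdiff_insert, smul_smul,
          pow_add]
      · simp [ha, haS, Finset.insert_subset_iff]
    · exact ⟨0, by simp [hLS, Finset.insert_subset_iff]⟩

lemma creString_mulVec_basisVec {L : List (Fin K)} (hL : L.Nodup) (S : Finset (Fin K)) :
    ∃ n : ℕ, (L.map fun P => (ann K P)ᴴ).prod *ᵥ basisVec S =
      if Disjoint L.toFinset S then (-1 : ℂ) ^ n • basisVec (S ∪ L.toFinset) else 0 := by
  induction L with
  | nil => exact ⟨0, by simp⟩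
  | cons a L ih =>
    obtain ⟨haL, hL⟩ := List.nodup_cons.1 hL
    obtain ⟨n, hn⟩ := ih hL
    rw [List.map_cons, List.prod_cons, ← mulVec_mulVec, hn]
    by_cases hLS : Disjoint L.toFinset S
    · refine ⟨n + jwCount (S ∪ L.toFinset) a, ?_⟩
      have ha : a ∈ S ∪ L.toFinset ↔ a ∈ S := by simp [haL]
      rw [if_pos hLS, mulVec_smul, cre_mulVec_basisVec]
      by_cases haS : a ∈ S
      · simp [ha, haS]
      · simp [ha, haS, hLS, smul_smul, pow_add]
    · exact ⟨0, by simp [hLS]⟩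

lemma exc_mulVec_basisVec {As Is : List (Fin K)} (hAs : As.Nodup) (hIs : Is.Nodup)
    (hAI : Disjoint As.toFinset Is.toFinset) (S : Finset (Fin K)) :
    ∃ n : ℕ, exc K As Is *ᵥ basisVec S =
      if Is.toFinset ⊆ S ∧ Disjoint As.toFinset S then
        (-1 : ℂ) ^ n • basisVec ((S \ Is.toFinset) ∪ As.toFinset) else 0 := by
  obtain ⟨n, hn⟩ := annString_mulVec_basisVec hIs S
  obtain ⟨m, hm⟩ := creString_mulVec_basisVec hAs (S \ Is.toFinset)
  refine ⟨n + m, ?_⟩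
  have hdisj : Disjoint As.toFinset (S \ Is.toFinset) ↔ Disjoint As.toFinset S := by
    simp only [Finset.disjoint_left, Finset.mem_sdiff] at hAI ⊢
    exact ⟨fun h P hA hS => h hA ⟨hS, hAI hA⟩, fun h P hA hS => h hA hS.1⟩
  rw [exc, ← mulVec_mulVec, hn]
  by_cases hIS : Is.toFinset ⊆ S
  · rw [if_pos hIS, mulVec_smul, hm]
    simp only [hdisj]
    by_cases hAS : Disjoint As.toFinset S <;> simp [hIS, hAS, smul_smul, pow_add]
  · simp [hIS]

variable {N : ℕ}

def refSet (K N : ℕ) : Finset (Fin K) := Finset.univ.filter fun i => i.val < N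

lemma mem_refSet {i : Fin K} : i ∈ refSet K N ↔ i.val < N := by
  simp [refSet]

lemma card_refSet (hNK : N ≤ K) : (refSet K N).card = N := by
  rw [refSet, Fin.card_filter_val_lt, min_eq_right hNK]

lemma refState_eq_basisVec : refState K N = basisVec (refSet K N) := by
  funext s
  have : occ (refSet K N) = fun i => if i.val < N then 1 else 0 := by
    funext i; simp [occ_apply, refSet]
  simp [refState, basisVec, Pi.single_apply, this, eq_comm]

def excitationLevel (N : ℕ) (S : Finset (Fin K)) : ℕ := (S \ refSet K N).card

@[simp]
lemma excitationLevel_refSet : excitationLevel N (refSet K N) = 0 := by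
  simp [excitationLevel]

lemma excitationLevel_le (S : Finset (Fin K)) : excitationLevel N S ≤ K :=
  (Finset.card_le_univ _).trans_eq (Fintype.card_fin K)

def rank (μ : ExIdx K N) : ℕ := μ.1.1.card

/-- The occupation set of the excited determinant `X_μ |φ₀⟩`. -/
def excitedSet (μ : ExIdx K N) : Finset (Fin K) := (refSet K N \ μ.1.2) ∪ μ.1.1

lemma one_le_rank (μ : ExIdx K N) : 1 ≤ rank μ := μ.2.2.2.2.1

lemma notMem_refSet_of_mem_fst (μ : ExIdx K N) {i : Fin K} (hi : i ∈ μ.1.1) :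
    i ∉ refSet K N :=
  fun h => (mem_refSet.1 h).not_ge (μ.2.1 i hi)

lemma mem_refSet_of_mem_snd (μ : ExIdx K N) {i : Fin K} (hi : i ∈ μ.1.2) : i ∈ refSet K N :=
  mem_refSet.2 (μ.2.2.1 i hi)

lemma exIdx_disjoint_refSet (μ : ExIdx K N) : Disjoint μ.1.1 (refSet K N) :=
  Finset.disjoint_left.2 fun _ => notMem_refSet_of_mem_fst μ

lemma exIdx_subset_refSet (μ : ExIdx K N) : μ.1.2 ⊆ refSet K N :=
  fun _ => mem_refSet_of_mem_snd μ

lemma excitedSet_sdiff_refSet (μ : ExIdx K N) : excitedSet μ \ refSet K N = μ.1.1 := by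
  ext i
  have := notMem_refSet_of_mem_fst μ (i := i)
  simp only [excitedSet, Finset.mem_sdiff, Finset.mem_union]
  tauto

lemma refSet_sdiff_excitedSet (μ : ExIdx K N) : refSet K N \ excitedSet μ = μ.1.2 := by
  ext i
  have := notMem_refSet_of_mem_fst μ (i := i)
  have := mem_refSet_of_mem_snd μ (i := i)
  simp only [excitedSet, Finset.mem_sdiff, Finset.mem_union]
  tauto

lemma excitedSet_injective : Function.Injective (excitedSet (K := K) (N := N)) := by
  intro μ ν h
  refine Subtype.ext (Prod.ext ?_ ?_)
  · rw [← excitedSet_sdiff_refSet μ, h, excitedSet_sdiff_refSet]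
  · rw [← refSet_sdiff_excitedSet μ, h, refSet_sdiff_excitedSet]

lemma excitationLevel_excitedSet (μ : ExIdx K N) : excitationLevel N (excitedSet μ) = rank μ := by
  rw [excitationLevel, excitedSet_sdiff_refSet, rank]

lemma exists_excitedSet_eq (hNK : N ≤ K) {S : Finset (Fin K)} (hS : S.card = N)
    (hS₀ : S ≠ refSet K N) : ∃ μ : ExIdx K N, excitedSet μ = S := by
  have hsub : ¬ S ⊆ refSet K N := fun h =>
    hS₀ (Finset.eq_of_subset_of_card_le h (by rw [card_refSet hNK, hS]))
  refine ⟨⟨(S \ refSet K N, refSet K N \ S), ?_, ?_, ?_, ?_, ?_⟩, ?_⟩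
  · simp [refSet]
  · simp +contextual [refSet]
  · exact Finset.card_sdiff_comm (by rw [card_refSet hNK, hS])
  · simpa [Finset.one_le_card, Finset.sdiff_nonempty] using hsub
  · exact (Finset.card_le_card Finset.sdiff_subset).trans hS.le
  · ext i
    simp only [excitedSet, Finset.mem_union, Finset.mem_sdiff]
    tauto

lemma excIdx_mulVec_basisVec (μ : ExIdx K N) (S : Finset (Fin K)) :
    ∃ n : ℕ, excIdx μ *ᵥ basisVec S =
      if μ.1.2 ⊆ S ∧ Disjoint μ.1.1 S then
        (-1 : ℂ) ^ n • basisVec ((S \ μ.1.2) ∪ μ.1.1) else 0 := by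
  have h := exc_mulVec_basisVec (As := μ.1.1.sort (· ≤ ·)) (Is := μ.1.2.sort (· ≤ ·))
    (Finset.sort_nodup _ _) (Finset.sort_nodup _ _)
    (by simpa only [Finset.sort_toFinset] using
      (exIdx_disjoint_refSet μ).mono_right (exIdx_subset_refSet μ)) S
  simpa only [excIdx, Finset.sort_toFinset] using h

noncomputable def excSign (μ : ExIdx K N) : ℂ :=
  (excIdx μ *ᵥ basisVec (refSet K N)) (occ (excitedSet μ))

lemma excSign_eq_neg_one_pow (μ : ExIdx K N) :
    ∃ n : ℕ, excSign μ = (-1) ^ n ∧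
      excIdx μ *ᵥ basisVec (refSet K N) = (-1 : ℂ) ^ n • basisVec (excitedSet μ) := by
  obtain ⟨n, hn⟩ := excIdx_mulVec_basisVec μ (refSet K N)
  rw [if_pos ⟨exIdx_subset_refSet μ, exIdx_disjoint_refSet μ⟩] at hn
  exact ⟨n, by simp [excSign, hn, excitedSet, basisVec_apply_occ], hn⟩

lemma excSign_ne_zero (μ : ExIdx K N) : excSign μ ≠ 0 := by
  obtain ⟨n, hn, -⟩ := excSign_eq_neg_one_pow μ
  simp [hn]

lemma excIdx_mulVec_refSet (μ : ExIdx K N) :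
    excIdx μ *ᵥ basisVec (refSet K N) = excSign μ • basisVec (excitedSet μ) := by
  obtain ⟨n, hn, h⟩ := excSign_eq_neg_one_pow μ
  rw [h, hn]

lemma excIdx_apply_ne_zero {μ : ExIdx K N} {s u : Fin K → Fin 2} (h : excIdx μ s u ≠ 0) :
    (occ.symm s).card = (occ.symm u).card ∧
      excitationLevel N (occ.symm s) = excitationLevel N (occ.symm u) + rank μ := by
  obtain ⟨U, rfl⟩ := occ.surjective u
  obtain ⟨n, hn⟩ := excIdx_mulVec_basisVec μ U
  rw [mulVec_basisVec] at hn
  have h' : excIdx μ s (occ U) = _ := congrFun hn s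
  rw [h'] at h
  simp only [Equiv.symm_apply_apply]
  split_ifs at h with hU
  · obtain ⟨hIU, hAU⟩ := hU
    have hs : s = occ ((U \ μ.1.2) ∪ μ.1.1) := by
      by_contra hs
      simp [basisVec, hs] at h
    subst hs
    simp only [Equiv.symm_apply_apply]
    have hIA := μ.2.2.2.1
    have hIcard := Finset.card_le_card hIU
    constructor
    · rw [Finset.card_union_of_disjoint (hAU.mono_right Finset.sdiff_subset).symm,
        Finset.card_sdiff_of_subset hIU]
      omega
    · have hsplit : (U \ μ.1.2 ∪ μ.1.1) \ refSet K N = (U \ refSet K N) ∪ μ.1.1 := by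
        ext i
        have := notMem_refSet_of_mem_fst μ (i := i)
        have := mem_refSet_of_mem_snd μ (i := i)
        simp only [Finset.mem_sdiff, Finset.mem_union]
        tauto
      rw [excitationLevel, excitationLevel, hsplit, rank,
        Finset.card_union_of_disjoint (hAU.mono_right Finset.sdiff_subset).symm]
  · exact absurd rfl h

noncomputable def clusterOp (t : ExIdx K N → ℂ) : Matrix (Fin K → Fin 2) (Fin K → Fin 2) ℂ :=
  ∑ μ, t μ • excIdx μ

lemma clusterOp_sub (t t' : ExIdx K N → ℂ) : clusterOp t - clusterOp t' = clusterOp (t - t') := by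
  simp [clusterOp, sub_smul, Finset.sum_sub_distrib]

lemma exists_of_clusterOp_apply_ne_zero {t : ExIdx K N → ℂ} {s u : Fin K → Fin 2}
    (h : clusterOp t s u ≠ 0) : ∃ μ, t μ ≠ 0 ∧ excIdx μ s u ≠ 0 := by
  rw [clusterOp, Matrix.sum_apply] at h
  obtain ⟨μ, -, hμ⟩ := Finset.exists_ne_zero_of_sum_ne_zero h
  exact ⟨μ, ne_zero_and_ne_zero_of_mul hμ⟩

variable (N) in
/-- Vectors supported on configurations with `c` particles at excitation level at least `m`. -/
def supportedAbove (c m : ℕ) : Submodule ℂ ((Fin K → Fin 2) → ℂ) where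
  carrier := {v | ∀ s, v s ≠ 0 →
    (occ.symm s).card = c ∧ m ≤ excitationLevel N (occ.symm s)}
  add_mem' {v w} hv hw s hs := by
    by_cases hvs : v s = 0
    · exact hw s (by simpa [hvs] using hs)
    · exact hv s hvs
  zero_mem' s hs := absurd rfl hs
  smul_mem' a v hv s hs := hv s (right_ne_zero_of_mul hs)

lemma supportedAbove_antitone {c m m' : ℕ} (h : m' ≤ m) :
    supportedAbove (K := K) N c m ≤ supportedAbove N c m' :=
  fun _ hv s hs => ⟨(hv s hs).1, h.trans (hv s hs).2⟩

lemma basisVec_mem_supportedAbove (S : Finset (Fin K)) :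
    basisVec S ∈ supportedAbove N S.card (excitationLevel N S) := by
  intro s hs
  obtain ⟨T, rfl⟩ := occ.surjective s
  rw [basisVec_apply_occ] at hs
  split_ifs at hs with h
  · simp [h]
  · exact absurd rfl hs

lemma clusterOp_mulVec_mem_supportedAbove {t : ExIdx K N → ℂ} {k c m : ℕ}
    (ht : ∀ μ, t μ ≠ 0 → k ≤ rank μ) {v : (Fin K → Fin 2) → ℂ}
    (hv : v ∈ supportedAbove N c m) : clusterOp t *ᵥ v ∈ supportedAbove N c (m + k) := by
  intro s hs
  obtain ⟨u, hsu, hu⟩ := Matrix.exists_ne_zero_of_mulVec_apply_ne_zero hs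
  obtain ⟨μ, hμ, hX⟩ := exists_of_clusterOp_apply_ne_zero hsu
  obtain ⟨hcard, hlevel⟩ := excIdx_apply_ne_zero hX
  have := ht μ hμ
  have := hv u hu
  exact ⟨by omega, by omega⟩

lemma clusterOp_pow_mulVec_mem_supportedAbove (t : ExIdx K N → ℂ) {c m : ℕ}
    {v : (Fin K → Fin 2) → ℂ} (hv : v ∈ supportedAbove N c m) (n : ℕ) :
    clusterOp t ^ n *ᵥ v ∈ supportedAbove N c (m + n) := by
  induction n with
  | zero => simpa using hv
  | succ n ih =>
    rw [pow_succ', ← mulVec_mulVec]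
    exact clusterOp_mulVec_mem_supportedAbove (fun μ _ => one_le_rank μ) ih

lemma apply_eq_zero_of_mem_supportedAbove {c m : ℕ} {v : (Fin K → Fin 2) → ℂ}
    (hv : v ∈ supportedAbove N c m) {s : Fin K → Fin 2}
    (hs : excitationLevel N (occ.symm s) < m) : v s = 0 := by
  by_contra h
  exact (hv s h).2.not_gt hs

lemma eq_zero_of_mem_supportedAbove {c m : ℕ} (hm : K < m) {v : (Fin K → Fin 2) → ℂ}
    (hv : v ∈ supportedAbove N c m) : v = 0 :=
  funext fun _ => apply_eq_zero_of_mem_supportedAbove hv ((excitationLevel_le _).trans_lt hm)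

lemma clusterOp_pow_eq_zero (t : ExIdx K N → ℂ) : clusterOp t ^ (K + 1) = 0 := by
  ext s u
  have h := clusterOp_pow_mulVec_mem_supportedAbove t
    (basisVec_mem_supportedAbove (N := N) (occ.symm u)) (K + 1)
  simpa [mulVec_basisVec] using congrFun (eq_zero_of_mem_supportedAbove (by omega) h) s

lemma exp_clusterOp {m : ℕ} (hm : K < m) (t : ExIdx K N → ℂ) :
    NormedSpace.exp (clusterOp t) = ∑ n ∈ Finset.range m, (n.factorial⁻¹ : ℂ) • clusterOp t ^ n := by
  rw [NormedSpace.exp_eq_tsum ℂ]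
  refine tsum_eq_sum fun n hn => ?_
  rw [pow_eq_zero_of_le (by simp at hn; omega) (clusterOp_pow_eq_zero t), smul_zero]

noncomputable def ccState (t : ExIdx K N → ℂ) : (Fin K → Fin 2) → ℂ :=
  NormedSpace.exp (clusterOp t) *ᵥ refState K N

lemma ccState_eq_sum {m : ℕ} (hm : K < m) (t : ExIdx K N → ℂ) :
    ccState t = ∑ n ∈ Finset.range m,
      (n.factorial⁻¹ : ℂ) • (clusterOp t ^ n *ᵥ basisVec (refSet K N)) := by
  simp only [ccState, exp_clusterOp hm, sum_mulVec, smul_mulVec, refState_eq_basisVec]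

lemma ccState_mem_supportedAbove (t : ExIdx K N → ℂ) :
    ccState t ∈ supportedAbove N (refSet K N).card 0 := by
  rw [ccState_eq_sum (lt_add_one K)]
  refine Submodule.sum_mem _ fun n _ => Submodule.smul_mem _ _ ?_
  exact supportedAbove_antitone (Nat.zero_le _)
    (clusterOp_pow_mulVec_mem_supportedAbove t (basisVec_mem_supportedAbove _) n)

lemma ccState_apply_refSet (t : ExIdx K N → ℂ) : ccState t (occ (refSet K N)) = 1 := by
  rw [ccState_eq_sum (lt_add_one K), Finset.sum_apply, Finset.sum_eq_single 0]
  · simp [basisVec_apply_occ]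
  · intro n _ hn
    rw [Pi.smul_apply, apply_eq_zero_of_mem_supportedAbove
      (clusterOp_pow_mulVec_mem_supportedAbove t (basisVec_mem_supportedAbove _) n)
      (by simpa [Nat.pos_iff_ne_zero] using hn), smul_zero]
  · simp

lemma clusterOp_mulVec_refSet (t : ExIdx K N → ℂ) :
    clusterOp t *ᵥ basisVec (refSet K N) =
      ∑ ν, (t ν * excSign ν) • basisVec (excitedSet ν) := by
  simp only [clusterOp, sum_mulVec, smul_mulVec, excIdx_mulVec_refSet, smul_smul]

lemma pow_sub_pow_mulVec_mem_supportedAbove {t t' : ExIdx K N → ℂ} {k : ℕ}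
    (h : ∀ μ, t μ ≠ t' μ → k ≤ rank μ) (n : ℕ) :
    (clusterOp t ^ (n + 1) - clusterOp t' ^ (n + 1)) *ᵥ basisVec (refSet K N) ∈
      supportedAbove N (refSet K N).card (k + n) := by
  have hsub : ∀ μ, (t - t') μ ≠ 0 → k ≤ rank μ := fun μ hμ => h μ (sub_ne_zero.1 hμ)
  have h₀ := basisVec_mem_supportedAbove (N := N) (refSet K N)
  rw [excitationLevel_refSet] at h₀
  induction n with
  | zero =>
    simpa [clusterOp_sub] using clusterOp_mulVec_mem_supportedAbove hsub h₀
  | succ n ih =>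
    have hsplit : clusterOp t ^ (n + 1 + 1) - clusterOp t' ^ (n + 1 + 1) =
        clusterOp t * (clusterOp t ^ (n + 1) - clusterOp t' ^ (n + 1)) +
          (clusterOp t - clusterOp t') * clusterOp t' ^ (n + 1) := by
      rw [pow_succ' (clusterOp t), pow_succ' (clusterOp t')]
      noncomm_ring
    rw [hsplit, add_mulVec, ← mulVec_mulVec, ← mulVec_mulVec, clusterOp_sub]
    refine Submodule.add_mem _ ?_ ?_
    · exact clusterOp_mulVec_mem_supportedAbove (fun μ _ => one_le_rank μ) ih
    · exact supportedAbove_antitone (by omega) (clusterOp_mulVec_mem_supportedAbove hsub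
        (clusterOp_pow_mulVec_mem_supportedAbove t' h₀ (n + 1)))

lemma ccState_sub_ccState_apply {t t' : ExIdx K N → ℂ} {μ : ExIdx K N}
    (h : ∀ ν, rank ν < rank μ → t ν = t' ν) :
    ccState t (occ (excitedSet μ)) - ccState t' (occ (excitedSet μ)) =
      (t μ - t' μ) * excSign μ := by
  have hk : ∀ ν, t ν ≠ t' ν → rank μ ≤ rank ν := fun ν hν => not_lt.1 (mt (h ν) hν)
  rw [ccState_eq_sum (lt_add_of_pos_right K two_pos), ccState_eq_sum (lt_add_of_pos_right K two_pos),
    Finset.sum_apply, Finset.sum_apply, ← Finset.sum_sub_distrib, Finset.sum_eq_single 1]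
  · rw [Pi.smul_apply, Pi.smul_apply, ← smul_sub, ← Pi.sub_apply, ← sub_mulVec, pow_one, pow_one,
      clusterOp_sub, clusterOp_mulVec_refSet]
    rw [Finset.sum_apply, Finset.sum_eq_single μ (fun ν _ hν => by
      rw [Pi.smul_apply, basisVec_apply_occ, if_neg fun h => hν (excitedSet_injective h).symm,
        smul_zero]) (by simp)]
    simp [basisVec_apply_occ]
  · intro n _ hn
    rw [Pi.smul_apply, Pi.smul_apply, ← smul_sub, ← Pi.sub_apply, ← sub_mulVec]
    obtain _ | _ | n := n
    · simp
    · exact absurd rfl hn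
    · rw [apply_eq_zero_of_mem_supportedAbove (pow_sub_pow_mulVec_mem_supportedAbove hk (n + 1))
        (by rw [occ.symm_apply_apply, excitationLevel_excitedSet]; omega), smul_zero]
  · simp

lemma eq_ccState_iff (hNK : N ≤ K) {w : (Fin K → Fin 2) → ℂ} (hw₀ : w (occ (refSet K N)) = 1)
    (hw : w ∈ supportedAbove N N 0) (t : ExIdx K N → ℂ) :
    w = ccState t ↔
      (fun μ : ExIdx K N => ccState t (occ (excitedSet μ))) = fun μ => w (occ (excitedSet μ)) := by
  refine ⟨fun h => by rw [h], fun h => funext fun s => ?_⟩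
  obtain ⟨S, rfl⟩ := occ.surjective s
  by_cases hS : S.card = N
  · by_cases hS₀ : S = refSet K N
    · rw [hS₀, hw₀, ccState_apply_refSet]
    · obtain ⟨μ, rfl⟩ := exists_excitedSet_eq hNK hS hS₀
      exact (congrFun h μ).symm
  · have hwS : w (occ S) = 0 := by
      by_contra h'
      simpa [hS] using (hw _ h').1
    have hcS : ccState t (occ S) = 0 := by
      by_contra h'
      simpa [card_refSet hNK, hS] using (ccState_mem_supportedAbove t _ h').1
    rw [hwS, hcS]

end CoupledCluster

open CoupledCluster

theorem stmt_19 (K N : ℕ) (hNK : N ≤ K) (w : (Fin K → Fin 2) → ℂ)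
    -- intermediate normalization ⟨φ₀|w⟩ = 1
    (hnorm : star (refState K N) ⬝ᵥ w = 1)
    -- w lies in the N-particle sector
    (hsector : ∀ s : Fin K → Fin 2, w s ≠ 0 →
      (Finset.univ.filter fun i : Fin K => s i = 1).card = N) :
    ∃! t : ExIdx K N → ℂ,
      w = (NormedSpace.exp (∑ μ : ExIdx K N, t μ • excIdx μ)).mulVec
            (refState K N) := by
  have hw₀ : w (occ (refSet K N)) = 1 := by
    simpa [refState_eq_basisVec, basisVec] using hnorm
  have hw : w ∈ supportedAbove N N 0 := fun s hs => ⟨hsector s hs, Nat.zero_le _⟩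
  refine (existsUnique_congr (eq_ccState_iff hNK hw₀ hw)).2 ?_
  exact (Function.bijective_of_triangular rank excSign excSign_ne_zero _
    fun t t' μ h => ccState_sub_ccState_apply h).existsUnique _
end
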